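/- Let r ≥ 0, let D ∈ D_n be a Dyck word, and let D' = Ψ_r(D). Then the number of tunnels of D with midpoint in x ≤ n+r (i.e., decompositions D = AuBdC with B a Dyck word and length(A) ≤ length(C) + 2r) equals the number of odd rises of D' in x > 2r (u-steps of D' at odd positions i with i > 2r) plus the number of u-steps of D' in positions i ≤ 2r. -/

import Mathlib

attribute [local instance] Classical.propDecidable

namespace DyckBij

/-- A word over `Bool` (`true` = up-step `u`, `false` = down-step `d`) is a Dyck word:
equally many `u`'s and `d`'s, and every prefix has at least as many `u`'s as `d`'s. -/
def IsDyck (w : List Bool) : Prop :=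
  w.count false = w.count true ∧
    ∀ p : List Bool, p <+: w → p.count false ≤ p.count true

/-- `Matched w i j`: the `u` at (0-indexed) position `i` of `w` is matched (as in matched
parentheses) with the `d` at position `j`, i.e. `w = A u B d C` with `B` a Dyck word,
`|A| = i` and `j = i + |B| + 1`. -/
def Matched (w : List Bool) (i j : ℕ) : Prop :=
  ∃ A B C : List Bool, IsDyck B ∧ w = A ++ true :: (B ++ false :: C) ∧
    A.length = i ∧ j = i + B.length + 1

/-- Positions `i` and `j` form a matched pair of steps of `w`. -/
def MatchPair (w : List Bool) (i j : ℕ) : Prop :=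
  Matched w i j ∨ Matched w j i

/-- The 0-indexed reading order `σ^{(r)}` on a word of length `L`: the first `2r` positions
are read in order, and the remaining positions are read in zigzag
`2r, L-1, 2r+1, L-2, …` (0-indexed). For `r = 0` this is the zigzag order `σ`. -/
def zigR (r L p : ℕ) : ℕ :=
  if p < 2 * r then p
  else if p % 2 = 0 then p / 2 + r
  else L + r - (p + 1) / 2

/-- The bijection `Ψ_r`: the `p`-th letter of `Ψ_r(w)` is `u` iff the match of the
`σ^{(r)}_p`-th step of `w` does not occur among the previously read steps
`σ^{(r)}_0, …, σ^{(r)}_{p-1}`. -/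
noncomputable def psiR (r : ℕ) (w : List Bool) : List Bool :=
  List.ofFn fun p : Fin w.length =>
    if ∃ p' : ℕ, p' < (p : ℕ) ∧
        MatchPair w (zigR r w.length p') (zigR r w.length (p : ℕ))
    then false else true

/-- The bijection `Ψ = Ψ_0`. -/
noncomputable def psi : List Bool → List Bool := psiR 0

/-- Number of tunnels of `w` with `|A| = |C| + 2r` (midpoint at `x = n + r`),
i.e. decompositions `w = A u B d C` with `B` a Dyck word; tunnels are indexed by `|A|`. -/
noncomputable def tunEq (r : ℕ) (w : List Bool) : ℕ :=
  {i : ℕ | ∃ A B C : List Bool, IsDyck B ∧ w = A ++ true :: (B ++ false :: C) ∧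
    A.length = i ∧ A.length = C.length + 2 * r}.ncard

/-- Number of tunnels of `w` with `|A| > |C| + 2r` (midpoint in `x > n + r`). -/
noncomputable def tunGt (r : ℕ) (w : List Bool) : ℕ :=
  {i : ℕ | ∃ A B C : List Bool, IsDyck B ∧ w = A ++ true :: (B ++ false :: C) ∧
    A.length = i ∧ C.length + 2 * r < A.length}.ncard

/-- Number of tunnels of `w` with `|A| ≤ |C| + 2r` (midpoint in `x ≤ n + r`). -/
noncomputable def tunLe (r : ℕ) (w : List Bool) : ℕ :=
  {i : ℕ | ∃ A B C : List Bool, IsDyck B ∧ w = A ++ true :: (B ++ false :: C) ∧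
    A.length = i ∧ A.length ≤ C.length + 2 * r}.ncard

/-- Number of centered tunnels `ct(w)`. -/
noncomputable def ctun (w : List Bool) : ℕ := tunEq 0 w

/-- Number of right tunnels `rt(w)`. -/
noncomputable def rtun (w : List Bool) : ℕ := tunGt 0 w

/-- Number of left tunnels `lt(w)`: tunnels with `|A| < |C|`. -/
noncomputable def ltun (w : List Bool) : ℕ :=
  {i : ℕ | ∃ A B C : List Bool, IsDyck B ∧ w = A ++ true :: (B ++ false :: C) ∧
    A.length = i ∧ A.length < C.length}.ncard

/-- Number of multitunnels of `w` with `|A| = |C| + 2r` (midpoint at `x = n + r`):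
decompositions `w = A B C` with `B` a nonempty Dyck word, indexed by `(|A|, |B|)`. -/
noncomputable def mtunEq (r : ℕ) (w : List Bool) : ℕ :=
  {q : ℕ × ℕ | ∃ A B C : List Bool, IsDyck B ∧ B ≠ [] ∧ w = A ++ B ++ C ∧
    A.length = q.1 ∧ B.length = q.2 ∧ A.length = C.length + 2 * r}.ncard

/-- Number of centered multitunnels `cmt(w)`. -/
noncomputable def cmtun (w : List Bool) : ℕ := mtunEq 0 w

/-- Number of hills `h(w)`: decompositions `w = X u d Y` with `X, Y` Dyck words. -/
noncomputable def numHills (w : List Bool) : ℕ :=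
  {i : ℕ | ∃ X Y : List Bool, IsDyck X ∧ IsDyck Y ∧
    w = X ++ true :: false :: Y ∧ X.length = i}.ncard

/-- Number of hills of `w` lying in `x > 2r`, i.e. with `|X| ≥ 2r`. -/
noncomputable def numHillsAfter (r : ℕ) (w : List Bool) : ℕ :=
  {i : ℕ | ∃ X Y : List Bool, IsDyck X ∧ IsDyck Y ∧
    w = X ++ true :: false :: Y ∧ X.length = i ∧ 2 * r ≤ X.length}.ncard

/-- Number of arches (equivalently, returns) `ret(w)`: decompositions
`w = X (u B d) Y` with `X, B, Y` Dyck words. -/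
noncomputable def numArches (w : List Bool) : ℕ :=
  {i : ℕ | ∃ X B Y : List Bool, IsDyck X ∧ IsDyck B ∧ IsDyck Y ∧
    w = X ++ true :: (B ++ false :: Y) ∧ X.length = i}.ncard

/-- Number of arches of `w` lying in `x ≥ 2r`, i.e. with `|X| ≥ 2r`. -/
noncomputable def numArchesAfter (r : ℕ) (w : List Bool) : ℕ :=
  {i : ℕ | ∃ X B Y : List Bool, IsDyck X ∧ IsDyck B ∧ IsDyck Y ∧
    w = X ++ true :: (B ++ false :: Y) ∧ X.length = i ∧ 2 * r ≤ X.length}.ncard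

/-- Number of odd rises `odr(w)`: `u`-steps at odd 1-indexed positions
(even 0-indexed positions). -/
noncomputable def oddRises (w : List Bool) : ℕ :=
  {p : ℕ | p < w.length ∧ p % 2 = 0 ∧ w.getD p false = true}.ncard

/-- Number of even rises `er(w)`: `u`-steps at even 1-indexed positions
(odd 0-indexed positions). -/
noncomputable def evenRises (w : List Bool) : ℕ :=
  {p : ℕ | p < w.length ∧ p % 2 = 1 ∧ w.getD p false = true}.ncard

/-- Number of odd rises of `w` at 1-indexed positions `> 2r`. -/
noncomputable def oddRisesAfter (r : ℕ) (w : List Bool) : ℕ :=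
  {p : ℕ | p < w.length ∧ p % 2 = 0 ∧ 2 * r ≤ p ∧ w.getD p false = true}.ncard

/-- Number of even rises of `w` at 1-indexed positions `> 2r`. -/
noncomputable def evenRisesAfter (r : ℕ) (w : List Bool) : ℕ :=
  {p : ℕ | p < w.length ∧ p % 2 = 1 ∧ 2 * r ≤ p ∧ w.getD p false = true}.ncard

/-- Number of `u`-steps of `w` at 1-indexed positions `≤ 2r`. -/
noncomputable def upstepsBefore (r : ℕ) (w : List Bool) : ℕ :=
  {p : ℕ | p < w.length ∧ p < 2 * r ∧ w.getD p false = true}.ncard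

/-- Number of peaks of `w`: occurrences of the factor `u d`. -/
noncomputable def numPeaks (w : List Bool) : ℕ :=
  {i : ℕ | i + 2 ≤ w.length ∧ w.getD i false = true ∧ w.getD (i + 1) true = false}.ncard

/-- Number of occurrences in `w` of a factor of length 3 beginning with `u`
and ending with `d` (occurrences of `u⋆d`). -/
noncomputable def numUStarD (w : List Bool) : ℕ :=
  {i : ℕ | i + 3 ≤ w.length ∧ w.getD i false = true ∧ w.getD (i + 2) true = false}.ncard

/-- `ih(w)`: 1 if `w` begins with the factor `u d`, else 0. -/
noncomputable def initHill (w : List Bool) : ℕ :=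
  if w.take 2 = [true, false] then 1 else 0

/-- `fh(w)`: 1 if `w = X u d` with `X` a Dyck word, else 0. -/
noncomputable def finHill (w : List Bool) : ℕ :=
  if ∃ X : List Bool, IsDyck X ∧ w = X ++ [true, false] then 1 else 0

/-- `π` avoids the pattern 321. -/
def Avoids321 {n : ℕ} (π : Equiv.Perm (Fin n)) : Prop :=
  ¬ ∃ i j k : Fin n, i < j ∧ j < k ∧ π k < π j ∧ π j < π i

/-- `π` avoids the pattern 132. -/
def Avoids132 {n : ℕ} (π : Equiv.Perm (Fin n)) : Prop :=
  ¬ ∃ i j k : Fin n, i < j ∧ j < k ∧ π i < π k ∧ π k < π j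

/-- Number of fixed points of `π`. -/
noncomputable def fixedPts {n : ℕ} (π : Equiv.Perm (Fin n)) : ℕ :=
  {i : Fin n | π i = i}.ncard

/-- Number of excedances of `π`. -/
noncomputable def excedances {n : ℕ} (π : Equiv.Perm (Fin n)) : ℕ :=
  {i : Fin n | i < π i}.ncard

/-- Number of descents of `π`. -/
noncomputable def descents {n : ℕ} (π : Equiv.Perm (Fin n)) : ℕ :=
  {i : ℕ | ∃ (h1 : i < n) (h2 : i + 1 < n), π ⟨i + 1, h2⟩ < π ⟨i, h1⟩}.ncard

/-- `α_r(π) = #{i : π(i) = i + r}` (stated 0-indexed, equivalent to the 1-indexed version). -/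
noncomputable def alphaStat {n : ℕ} (r : ℕ) (π : Equiv.Perm (Fin n)) : ℕ :=
  {i : Fin n | (π i : ℕ) = (i : ℕ) + r}.ncard

/-- `β_r(π) = #{i : i > r, π(i) = i}` (for 1-indexed `i`; 0-indexed this is `r ≤ i`). -/
noncomputable def betaStat {n : ℕ} (r : ℕ) (π : Equiv.Perm (Fin n)) : ℕ :=
  {i : Fin n | r ≤ (i : ℕ) ∧ π i = i}.ncard

/-!
Let `L = |w|` and `q = zigR r L p` be the step read at time `p`, where `p < 2r` or `p` is even.
At that time the steps already read are exactly those at positions `< q` and those at positions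
`≥ L + 2r - q`. So the `p`-th letter of `Ψ_r(w)` is `u` iff `q` is an up-step whose match `j`
satisfies `q + j < L + 2r`, i.e. iff `q` opens a tunnel with `|A| ≤ |C| + 2r`. As `p` ranges
over these times, `q` ranges injectively over all candidate openers of such tunnels.
-/

lemma length_eq_of_eq_append {w A B C : List Bool} (hw : w = A ++ true :: (B ++ false :: C)) :
    w.length = A.length + B.length + C.length + 2 := by
  subst hw; simp only [List.length_append, List.length_cons]; omega

lemma isDyck_of_forall_take {B : List Bool} (hbal : B.count false = B.count true)
    (h : ∀ t, (B.take t).count false ≤ (B.take t).count true) : IsDyck B :=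
  ⟨hbal, fun p hp => by rw [List.prefix_iff_eq_take.mp hp]; exact h _⟩

lemma IsDyck.count_take_le {w : List Bool} (hw : IsDyck w) (t : ℕ) :
    (w.take t).count false ≤ (w.take t).count true :=
  hw.2 _ (List.take_prefix _ _)

lemma eq_take_append_cons_drop {w : List Bool} {i : ℕ} {b : Bool} (hi : i < w.length)
    (hb : w.getD i false = b) : w = w.take i ++ b :: w.drop (i + 1) := by
  rw [List.getD_eq_getElem _ _ hi] at hb
  rw [← hb, List.getElem_cons_drop, List.take_append_drop]

lemma exists_isDyck_append_false_cons {T : List Bool} (h : T.count true < T.count false) :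
    ∃ B C, IsDyck B ∧ T = B ++ false :: C := by
  have hex : ∃ k, (T.take k).count true < (T.take k).count false :=
    ⟨T.length, by rwa [List.take_length]⟩
  obtain ⟨k, hk, hmin⟩ : ∃ k, (T.take k).count true < (T.take k).count false ∧
      ∀ m < k, (T.take m).count false ≤ (T.take m).count true :=
    ⟨Nat.find hex, Nat.find_spec hex, fun m hm => not_lt.mp (Nat.find_min hex hm)⟩
  obtain _ | k := k
  · simp at hk
  have hprev := hmin k k.lt_succ_self
  have hkT : k < T.length := by
    by_contra! hle
    rw [List.take_of_length_le hle] at hprev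
    rw [List.take_of_length_le (by omega)] at hk
    omega
  rw [← List.take_append_getElem hkT] at hk
  cases hTk : T[k]
  · refine ⟨T.take k, T.drop (k + 1), isDyck_of_forall_take ?_ fun t => ?_, ?_⟩
    · rw [hTk] at hk; grind
    · rw [List.take_take]; exact hmin _ (by omega)
    · exact eq_take_append_cons_drop hkT (by rw [List.getD_eq_getElem _ _ hkT, hTk])
  · rw [hTk] at hk; grind

def mirror (l : List Bool) : List Bool := (l.map not).reverse

lemma mirror_append (l l' : List Bool) : mirror (l ++ l') = mirror l' ++ mirror l := by
  simp [mirror]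

lemma mirror_mirror (l : List Bool) : mirror (mirror l) = l := by
  simp [mirror, List.map_reverse, Function.comp_def]

lemma count_mirror (b : Bool) (l : List Bool) : (mirror l).count b = l.count (!b) := by
  rw [mirror, List.count_reverse, ← List.count_map_of_injective l not Bool.not_injective,
    Bool.not_not]

lemma IsDyck.mirror {B : List Bool} (hB : IsDyck B) : IsDyck (mirror B) := by
  refine ⟨by simp [count_mirror, hB.1], fun p ⟨s, hs⟩ => ?_⟩
  have hsplit : B = DyckBij.mirror s ++ DyckBij.mirror p := by
    rw [← mirror_append, hs, mirror_mirror]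
  have hpre := hB.2 _ (hsplit ▸ List.prefix_append _ _)
  have hbal := hB.1
  rw [hsplit] at hbal
  simp only [List.count_append, count_mirror, Bool.not_true, Bool.not_false] at hbal hpre
  omega

lemma exists_append_true_cons_isDyck {P : List Bool} (h : P.count false < P.count true) :
    ∃ A B, IsDyck B ∧ P = A ++ true :: B := by
  obtain ⟨B, C, hB, hPBC⟩ := exists_isDyck_append_false_cons (T := mirror P)
    (by simpa [count_mirror] using h)
  refine ⟨mirror C, mirror B, hB.mirror, ?_⟩
  rw [← mirror_mirror P, hPBC]
  simp [mirror]

section Matched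

variable {w : List Bool} {i j : ℕ}

lemma Matched.lt (h : Matched w i j) : i < j := by
  obtain ⟨A, B, C, -, -, rfl, rfl⟩ := h; omega

lemma Matched.lt_length (h : Matched w i j) : j < w.length := by
  obtain ⟨A, B, C, -, hw, rfl, rfl⟩ := h; rw [length_eq_of_eq_append hw]; omega

lemma Matched.getD_left (h : Matched w i j) : w.getD i false = true := by
  obtain ⟨A, B, C, -, rfl, rfl, -⟩ := h; simp

lemma Matched.getD_right (h : Matched w i j) : w.getD j false = false := by
  obtain ⟨A, B, C, -, rfl, rfl, rfl⟩ := h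
  rw [show A ++ true :: (B ++ false :: C) = (A ++ true :: B) ++ false :: C by simp,
    List.getD_append_right _ _ _ _ (by simp only [List.length_append, List.length_cons]; omega)]
  simp

lemma IsDyck.not_append_false_prefix {B B' : List Bool} (hB : IsDyck B) (hB' : IsDyck B') :
    ¬ B' ++ [false] <+: B := fun hpre => by
  have hcount := hB.2 _ hpre
  have hbal := hB'.1
  grind

lemma Matched.right_unique {j' : ℕ} (h : Matched w i j) (h' : Matched w i j') : j = j' := by
  obtain ⟨A, B, C, hB, hw, hA, rfl⟩ := h
  obtain ⟨A', B', C', hB', hw', hA', rfl⟩ := h'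
  have hrest := (List.append_inj (hw.symm.trans hw') (hA.trans hA'.symm)).2
  simp only [List.cons.injEq, true_and] at hrest
  have hpre : B ++ [false] <+: B ++ false :: C := ⟨C, by simp⟩
  have hpre' : B' ++ [false] <+: B ++ false :: C := hrest ▸ ⟨C', by simp⟩
  rcases lt_trichotomy B.length B'.length with hlt | heq | hlt
  · exact (hB'.not_append_false_prefix hB
      (List.prefix_of_prefix_length_le hpre (hrest ▸ List.prefix_append _ _) (by simpa))).elim
  · omega
  · exact (hB.not_append_false_prefix hB'
      (List.prefix_of_prefix_length_le hpre' (List.prefix_append _ _) (by simpa))).elim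

lemma IsDyck.exists_matched_right (hw : IsDyck w) (hi : i < w.length)
    (hu : w.getD i false = true) : ∃ j, Matched w i j := by
  have hdec := eq_take_append_cons_drop hi hu
  have hbal := hw.1
  have hA := hw.count_take_le i
  rw [hdec] at hbal
  obtain ⟨B, C, hB, hT⟩ := exists_isDyck_append_false_cons (T := w.drop (i + 1)) (by grind)
  exact ⟨_, w.take i, B, C, hB, hT ▸ hdec, List.length_take_of_le hi.le, rfl⟩

lemma IsDyck.exists_matched_left (hw : IsDyck w) (hj : j < w.length)
    (hd : w.getD j false = false) : ∃ i, Matched w i j := by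
  have hdec := eq_take_append_cons_drop hj hd
  have hpre := hw.count_take_le (j + 1)
  rw [← List.take_append_getElem hj, ← List.getD_eq_getElem _ false hj, hd] at hpre
  obtain ⟨A, B, hB, hP⟩ := exists_append_true_cons_isDyck (P := w.take j) (by grind)
  have hlen : (w.take j).length = j := List.length_take_of_le hj.le
  refine ⟨A.length, A, B, w.drop (j + 1), hB, hdec.trans (by rw [hP]; simp), rfl, ?_⟩
  rw [hP, List.length_append, List.length_cons] at hlen
  omega

end Matched

section Reading

variable {r L p : ℕ}

lemma zigR_of_lt (h : p < 2 * r) : zigR r L p = p := if_pos h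

lemma zigR_lt (hp : p < L) : zigR r L p < L := by
  unfold zigR; split_ifs <;> omega

lemma zigR_injOn : Set.InjOn (zigR r L) {p | p < 2 * r ∨ p % 2 = 0} := by
  intro p (hp : p < 2 * r ∨ p % 2 = 0) p' (hp' : p' < 2 * r ∨ p' % 2 = 0) h
  unfold zigR at h
  split_ifs at h <;> omega

lemma exists_lt_zigR_eq_iff {m : ℕ} (hp : p < L) (hpar : p < 2 * r ∨ p % 2 = 0) (hm : m < L) :
    (∃ p' < p, zigR r L p' = m) ↔ m < zigR r L p ∨ L + 2 * r ≤ m + zigR r L p := by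
  constructor
  · rintro ⟨p', hp', rfl⟩
    unfold zigR
    split_ifs <;> omega
  · rintro (h | h)
    · by_cases hm2 : m < 2 * r
      · exact ⟨m, by unfold zigR at h; split_ifs at h <;> omega, zigR_of_lt hm2⟩
      · refine ⟨2 * (m - r), ?_, ?_⟩ <;> unfold zigR at * <;> split_ifs at * <;> omega
    · refine ⟨2 * (L + r - m) - 1, ?_, ?_⟩ <;> unfold zigR at * <;> split_ifs at * <;> omega

end Reading

lemma length_psiR (r : ℕ) (w : List Bool) : (psiR r w).length = w.length := by
  simp [psiR]

lemma psiR_getD_eq_true_iff_not_exists {r p : ℕ} {w : List Bool} (hp : p < w.length) :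
    (psiR r w).getD p false = true ↔
      ¬ ∃ p' < p, MatchPair w (zigR r w.length p') (zigR r w.length p) := by
  rw [List.getD_eq_getElem _ _ (by rwa [length_psiR])]
  simp only [psiR, List.getElem_ofFn]
  split_ifs with h <;> simpa using h

lemma psiR_getD_eq_true_iff {r p : ℕ} {w : List Bool} (hw : IsDyck w) (hp : p < w.length)
    (hpar : p < 2 * r ∨ p % 2 = 0) :
    (psiR r w).getD p false = true ↔
      ∃ j, Matched w (zigR r w.length p) j ∧ zigR r w.length p + j < w.length + 2 * r := by
  have hq := zigR_lt (r := r) hp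
  have hread := fun m => exists_lt_zigR_eq_iff (m := m) hp hpar
  rw [psiR_getD_eq_true_iff_not_exists hp]
  set q := zigR r w.length p
  constructor
  · intro hnot
    cases hu : w.getD q false
    · obtain ⟨i, hi⟩ := hw.exists_matched_left hq hu
      obtain ⟨p', hp', hp'i⟩ := (hread i (hi.lt.trans hq)).2 (Or.inl hi.lt)
      exact (hnot ⟨p', hp', Or.inl (hp'i ▸ hi)⟩).elim
    · obtain ⟨j, hj⟩ := hw.exists_matched_right hq hu
      refine ⟨j, hj, not_le.mp fun hge => hnot ?_⟩
      obtain ⟨p', hp', hp'j⟩ := (hread j hj.lt_length).2 (Or.inr (by omega))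
      exact ⟨p', hp', Or.inr (hp'j ▸ hj)⟩
  · rintro ⟨j, hj, hlt⟩ ⟨p', hp', hpair | hpair⟩
    · nomatch hj.getD_left.symm.trans hpair.getD_right
    · have hp'j := hpair.right_unique hj
      have := (hread j hj.lt_length).1 ⟨p', hp', hp'j⟩
      have := hj.lt
      omega

lemma tunLe_eq_ncard_matched (r : ℕ) (w : List Bool) :
    tunLe r w = {i | ∃ j, Matched w i j ∧ i + j < w.length + 2 * r}.ncard := by
  unfold tunLe
  congr 1
  ext i
  constructor
  · rintro ⟨A, B, C, hB, hw, rfl, hle⟩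
    exact ⟨_, ⟨A, B, C, hB, hw, rfl, rfl⟩, by rw [length_eq_of_eq_append hw]; omega⟩
  · rintro ⟨_, ⟨A, B, C, hB, hw, rfl, rfl⟩, hlt⟩
    exact ⟨A, B, C, hB, hw, rfl, by rw [length_eq_of_eq_append hw] at hlt; omega⟩

/-- Positions are 0-indexed: even `p` are the odd positions of the paper. -/
def upstepsBeforeOrEven (r : ℕ) (w : List Bool) : Set ℕ :=
  {p | p < w.length ∧ (p < 2 * r ∨ p % 2 = 0) ∧ w.getD p false = true}

lemma ncard_upstepsBeforeOrEven (r : ℕ) (w : List Bool) :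
    (upstepsBeforeOrEven r w).ncard = oddRisesAfter r w + upstepsBefore r w := by
  have hsplit : upstepsBeforeOrEven r w =
      {p | p < w.length ∧ p % 2 = 0 ∧ 2 * r ≤ p ∧ w.getD p false = true} ∪
        {p | p < w.length ∧ p < 2 * r ∧ w.getD p false = true} := by
    ext p
    simp only [upstepsBeforeOrEven, Set.mem_union, Set.mem_ofPred_eq]
    grind
  rw [hsplit, Set.ncard_union_eq (Set.disjoint_left.mpr fun p hp hp' => by grind)
    ((Set.finite_lt_nat _).subset fun p hp => hp.1) ((Set.finite_lt_nat _).subset fun p hp => hp.1)]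
  rfl

lemma image_zigR_upstepsBeforeOrEven_psiR {r : ℕ} {w : List Bool} (hw : IsDyck w) :
    zigR r w.length '' upstepsBeforeOrEven r (psiR r w) =
      {i | ∃ j, Matched w i j ∧ i + j < w.length + 2 * r} := by
  ext i
  simp only [upstepsBeforeOrEven, length_psiR, Set.mem_image, Set.mem_ofPred_eq]
  constructor
  · rintro ⟨p, ⟨hp, hpar, hu⟩, rfl⟩
    exact (psiR_getD_eq_true_iff hw hp hpar).1 hu
  · rintro ⟨j, hj, hlt⟩
    have := hj.lt
    have := hj.lt_length
    obtain ⟨p, hp, hpar, rfl⟩ :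
        ∃ p < w.length, (p < 2 * r ∨ p % 2 = 0) ∧ zigR r w.length p = i := by
      by_cases hi : i < 2 * r
      · exact ⟨i, by omega, Or.inl hi, zigR_of_lt hi⟩
      · exact ⟨2 * (i - r), by omega, Or.inr (by omega), by unfold zigR; split_ifs <;> omega⟩
    exact ⟨p, ⟨hp, hpar, (psiR_getD_eq_true_iff hw hp hpar).2 ⟨j, hj, hlt⟩⟩, rfl⟩

theorem tunLe_eq_oddRisesAfter_add_upstepsBefore_general (r : ℕ) (D : List Bool) (hD : IsDyck D) :
    tunLe r D = oddRisesAfter r (psiR r D) + upstepsBefore r (psiR r D) := by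
  calc tunLe r D = (zigR r D.length '' upstepsBeforeOrEven r (psiR r D)).ncard := by
        rw [tunLe_eq_ncard_matched, image_zigR_upstepsBeforeOrEven_psiR hD]
    _ = (upstepsBeforeOrEven r (psiR r D)).ncard :=
        (zigR_injOn.mono fun _ hp => hp.2.1).ncard_image
    _ = oddRisesAfter r (psiR r D) + upstepsBefore r (psiR r D) :=
        ncard_upstepsBeforeOrEven r (psiR r D)

/-- tunnels of `D ∈ D_n` with midpoint in `x ≤ n + r` (i.e. `|A| ≤ |C| + 2r`)
correspond in number to odd rises of `D' = Ψ_r(D)` at 1-indexed odd positions `> 2r`,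
plus `u`-steps of `D'` at positions `≤ 2r`. -/
theorem tunLe_eq_oddRisesAfter_add_upstepsBefore (r n : ℕ) (D : List Bool) (hD : IsDyck D)
    (hlen : D.length = 2 * n) :
    tunLe r D = oddRisesAfter r (psiR r D) + upstepsBefore r (psiR r D) :=
  tunLe_eq_oddRisesAfter_add_upstepsBefore_general r D hD

end DyckBij
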